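/- Let v, w, z be nonzero vectors in ℝ^n all of whose coordinates are nonnegative. Denote by cos(x,y) = ⟨x,y⟩/(‖x‖·‖y‖) the cosine similarity of nonzero vectors x and y. Then cos(v,z) ≥ cos(w,z) − √(1 − cos(v,w)²). -/

import Mathlib

/-!
Write `α = ∠(v, w)`, `β = ∠(w, z)`, `γ = ∠(v, z)`, so that the cosine similarities are `cos α`,
`cos β`, `cos γ` and `√(1 - cos² α) = sin α`. Nonnegative coordinates make all three angles at
most `π / 2`, and the triangle inequality for angles gives `γ ≤ α + β`. If `α + β ≤ π / 2` then
`cos γ ≥ cos (α + β) ≥ cos β - sin α`; otherwise `cos β ≤ cos (π / 2 - α) = sin α ≤ sin α + cos γ`.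
-/

open scoped RealInnerProductSpace

open Real InnerProductGeometry

theorem EuclideanSpace.inner_nonneg_of_nonneg {ι : Type*} [Fintype ι]
    {x y : EuclideanSpace ℝ ι} (hx : ∀ i, 0 ≤ x i) (hy : ∀ i, 0 ≤ y i) : 0 ≤ ⟪x, y⟫ := by
  rw [PiLp.inner_apply]
  exact Finset.sum_nonneg fun i _ => mul_nonneg (hy i) (hx i)

theorem InnerProductGeometry.angle_le_pi_div_two_of_inner_nonneg {V : Type*}
    [NormedAddCommGroup V] [InnerProductSpace ℝ V] {x y : V} (h : 0 ≤ ⟪x, y⟫) :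
    angle x y ≤ π / 2 :=
  arccos_le_pi_div_two.mpr (by positivity)

theorem Real.cos_sub_cos_add_le_sin {α β : ℝ} (hα : 0 ≤ α) (hβ : 0 ≤ β) (hαβ : α + β ≤ π / 2) :
    cos β - cos (α + β) ≤ sin α := by
  have hdiff : cos β - cos (α + β) = 2 * sin (α / 2) * sin (β + α / 2) := by
    rw [cos_sub_cos, show (β + (α + β)) / 2 = β + α / 2 by ring,
      show (β - (α + β)) / 2 = -(α / 2) by ring, sin_neg]
    ring
  have hsin : sin α = 2 * sin (α / 2) * sin (π / 2 - α / 2) := by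
    rw [sin_pi_div_two_sub, ← sin_two_mul, mul_div_cancel₀ α two_ne_zero]
  have hhalf : 0 ≤ sin (α / 2) := sin_nonneg_of_nonneg_of_le_pi (by linarith) (by linarith)
  rw [hdiff, hsin]
  gcongr
  exact sin_le_sin_of_le_of_le_pi_div_two (by linarith [pi_pos]) (by linarith) (by linarith)

theorem Real.cos_sub_sin_le_cos_of_le_add {α β γ : ℝ} (hα : 0 ≤ α) (hα' : α ≤ π / 2)
    (hβ : 0 ≤ β) (hβ' : β ≤ π) (hγ : 0 ≤ γ) (hγ' : γ ≤ π / 2) (hγαβ : γ ≤ α + β) :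
    cos β - sin α ≤ cos γ := by
  rcases le_total (α + β) (π / 2) with h | h
  · calc cos β - sin α ≤ cos (α + β) := by linarith [cos_sub_cos_add_le_sin hα hβ h]
      _ ≤ cos γ := cos_le_cos_of_nonneg_of_le_pi hγ (by linarith [pi_pos]) hγαβ
  · have hcos : cos β ≤ sin α := by
      rw [← cos_pi_div_two_sub]
      exact cos_le_cos_of_nonneg_of_le_pi (by linarith) hβ' (by linarith)
    linarith [cos_nonneg_of_neg_pi_div_two_le_of_le (by linarith [pi_pos] : -(π / 2) ≤ γ) hγ']

theorem cosine_similarity_transitive_general (n : ℕ)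
    (v w z : EuclideanSpace ℝ (Fin n))
    (hvpos : ∀ i, 0 ≤ v i) (hwpos : ∀ i, 0 ≤ w i) (hzpos : ∀ i, 0 ≤ z i) :
    ⟪v, z⟫ / (‖v‖ * ‖z‖) ≥
      ⟪w, z⟫ / (‖w‖ * ‖z‖) - Real.sqrt (1 - (⟪v, w⟫ / (‖v‖ * ‖w‖)) ^ 2) := by
  have acute {x y : EuclideanSpace ℝ (Fin n)} (hx : ∀ i, 0 ≤ x i) (hy : ∀ i, 0 ≤ y i) :
      angle x y ≤ π / 2 :=
    angle_le_pi_div_two_of_inner_nonneg (EuclideanSpace.inner_nonneg_of_nonneg hx hy)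
  rw [← cos_angle, ← cos_angle, ← cos_angle,
    ← sin_eq_sqrt_one_sub_cos_sq (angle_nonneg v w) (angle_le_pi v w)]
  exact cos_sub_sin_le_cos_of_le_add (angle_nonneg v w) (acute hvpos hwpos)
    (angle_nonneg w z) (angle_le_pi w z) (angle_nonneg v z) (acute hvpos hzpos)
    (angle_le_angle_add_angle v w z)

/-- Cosine-similarity "transitivity" inequality for nonnegative vectors:
`cos(v,z) ≥ cos(w,z) − √(1 − cos(v,w)²)`. -/
theorem cosine_similarity_transitive (n : ℕ)
    (v w z : EuclideanSpace ℝ (Fin n))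
    (hv : v ≠ 0) (hw : w ≠ 0) (hz : z ≠ 0)
    (hvpos : ∀ i, 0 ≤ v i) (hwpos : ∀ i, 0 ≤ w i) (hzpos : ∀ i, 0 ≤ z i) :
    ⟪v, z⟫ / (‖v‖ * ‖z‖) ≥
      ⟪w, z⟫ / (‖w‖ * ‖z‖) - Real.sqrt (1 - (⟪v, w⟫ / (‖v‖ * ‖w‖)) ^ 2) :=
  cosine_similarity_transitive_general n v w z hvpos hwpos hzpos
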